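/- For n ≥ 1 and α > 0: C_n^{α+1/2}(x) + C_{n−1}^{α+1/2}(x) = binomial(n+2α−1, n) · ((n+α)/α) · Q_n^{(α, α−1)}(x). -/

import Mathlib

/-!
Both Gegenbauer polynomials and the Jacobi polynomial are multiples of terminating
hypergeometric sums `₂F₁(-n, b; α + 1; (1 - x)/2)`. With `b = n + 2α` the left side is a
combination of `₂F₁(-n, b + 1)` and `₂F₁(-(n - 1), b)`, and the contiguous relation
`b ₂F₁(-n, b + 1) + n ₂F₁(-(n - 1), b) = (n + b) ₂F₁(-n, b)`, which holds termwise
because `(b + k) + (n - k) = n + b`, collapses it to the multiple `(n + α)/α` of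
`₂F₁(-n, b)`.
-/

open Finset

/-- The Pochhammer symbol `(a)_n = a (a+1) ⋯ (a+n-1)` for real `a`. -/
def poch (a : ℝ) (n : ℕ) : ℝ := ∏ i ∈ Finset.range n, (a + i)

/-- Generalized binomial coefficient `binomial(a, n) = a(a-1)⋯(a-n+1)/n!`. -/
noncomputable def rchoose (a : ℝ) (n : ℕ) : ℝ := poch (a - n + 1) n / (Nat.factorial n : ℝ)

/-- The Gegenbauer (ultraspherical) polynomial. -/
noncomputable def gegenbauerC (n : ℕ) (lam x : ℝ) : ℝ :=
  (poch (2 * lam) n / (Nat.factorial n : ℝ)) *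
    ∑ k ∈ Finset.range (n + 1),
      poch (-(n : ℝ)) k * poch ((n : ℝ) + 2 * lam) k /
        (poch (lam + 1 / 2) k * (Nat.factorial k : ℝ)) * ((1 - x) / 2) ^ k

/-- The Jacobi polynomial. -/
noncomputable def jacobiP (n : ℕ) (α β x : ℝ) : ℝ :=
  (poch (α + 1) n / (Nat.factorial n : ℝ)) *
    ∑ k ∈ Finset.range (n + 1),
      poch (-(n : ℝ)) k * poch ((n : ℝ) + α + β + 1) k /
        (poch (α + 1) k * (Nat.factorial k : ℝ)) * ((1 - x) / 2) ^ k

/-- Normalized Jacobi polynomial `Q_n^{(α,β)}(x) = P_n^{(α,β)}(x) / P_n^{(α,β)}(1)`. -/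
noncomputable def jacobiQ (n : ℕ) (α β x : ℝ) : ℝ := jacobiP n α β x / jacobiP n α β 1

lemma poch_succ (a : ℝ) (n : ℕ) : poch a (n + 1) = poch a n * (a + n) :=
  prod_range_succ _ _

lemma poch_succ' (a : ℝ) (n : ℕ) : poch a (n + 1) = a * poch (a + 1) n := by
  rw [poch, prod_range_succ', mul_comm, Nat.cast_zero, add_zero]
  congr 1
  refine prod_congr rfl fun i _ => ?_
  push_cast
  ring

lemma mul_poch_add_one (a : ℝ) (n : ℕ) : a * poch (a + 1) n = poch a n * (a + n) := by
  rw [← poch_succ', poch_succ]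

lemma poch_pos {a : ℝ} (ha : 0 < a) (n : ℕ) : 0 < poch a n :=
  prod_pos fun _ _ => by positivity

lemma poch_neg_natCast_self_succ (m : ℕ) : poch (-(m : ℝ)) (m + 1) = 0 :=
  prod_eq_zero (self_mem_range_succ m) (by ring)

/-- `₂F₁(-n, b; c; t)`, a polynomial in `t` since `(-n)_k = 0` for `k > n`. -/
noncomputable def hyp2F1Neg (n : ℕ) (b c t : ℝ) : ℝ :=
  ∑ k ∈ range (n + 1),
    poch (-(n : ℝ)) k * poch b k / (poch c k * (Nat.factorial k : ℝ)) * t ^ k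

lemma hyp2F1Neg_eq_sum_range_succ (n : ℕ) (b c t : ℝ) :
    hyp2F1Neg n b c t = ∑ k ∈ range (n + 2),
      poch (-(n : ℝ)) k * poch b k / (poch c k * (Nat.factorial k : ℝ)) * t ^ k := by
  rw [hyp2F1Neg, sum_range_succ _ (n + 1), poch_neg_natCast_self_succ, zero_mul, zero_div,
    zero_mul, add_zero]

lemma hyp2F1Neg_zero_right (n : ℕ) (b c : ℝ) : hyp2F1Neg n b c 0 = 1 := by
  rw [hyp2F1Neg, sum_eq_single 0 (fun k _ hk => by rw [zero_pow hk, mul_zero]) (by simp)]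
  simp [poch]

theorem hyp2F1Neg_contiguous (n : ℕ) (b c t : ℝ) :
    b * hyp2F1Neg (n + 1) (b + 1) c t + (n + 1) * hyp2F1Neg n b c t
      = (n + 1 + b) * hyp2F1Neg (n + 1) b c t := by
  rw [hyp2F1Neg_eq_sum_range_succ n, hyp2F1Neg, hyp2F1Neg, mul_sum, mul_sum, mul_sum,
    ← sum_add_distrib]
  refine sum_congr rfl fun k _ => ?_
  have hb := mul_poch_add_one b k
  have hneg := mul_poch_add_one (-((n : ℝ) + 1)) k
  rw [show -((n : ℝ) + 1) + 1 = -n by ring] at hneg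
  push_cast
  linear_combination (t ^ k / (poch c k * k.factorial)) *
    (poch (-((n : ℝ) + 1)) k * hb - poch b k * hneg)

lemma gegenbauerC_eq_hyp2F1Neg (n : ℕ) (lam x : ℝ) :
    gegenbauerC n lam x = poch (2 * lam) n / (Nat.factorial n : ℝ) *
      hyp2F1Neg n (n + 2 * lam) (lam + 1 / 2) ((1 - x) / 2) := rfl

lemma jacobiQ_eq_hyp2F1Neg (n : ℕ) {α : ℝ} (hα : poch (α + 1) n ≠ 0) (β x : ℝ) :
    jacobiQ n α β x = hyp2F1Neg n (n + α + β + 1) (α + 1) ((1 - x) / 2) := by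
  have hP (y : ℝ) : jacobiP n α β y
      = poch (α + 1) n / n.factorial * hyp2F1Neg n (n + α + β + 1) (α + 1) ((1 - y) / 2) := rfl
  have hc : poch (α + 1) n / n.factorial ≠ 0 := div_ne_zero hα (by positivity)
  rw [jacobiQ, hP, hP, sub_self, zero_div, hyp2F1Neg_zero_right, mul_one,
    mul_div_cancel_left₀ _ hc]

lemma rchoose_eq_poch (a : ℝ) (n : ℕ) : rchoose (n + a - 1) n = poch a n / n.factorial := by
  rw [rchoose, show (n : ℝ) + a - 1 - n + 1 = a by ring]

theorem gegenbauer_sum_two_jacobi (n : ℕ) (hn : 1 ≤ n) (α : ℝ) (hα : 0 < α) (x : ℝ) :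
    gegenbauerC n (α + 1 / 2) x + gegenbauerC (n - 1) (α + 1 / 2) x
      = rchoose ((n : ℝ) + 2 * α - 1) n * (((n : ℝ) + α) / α) * jacobiQ n α (α - 1) x := by
  obtain ⟨m, rfl⟩ : ∃ m, n = m + 1 := ⟨n - 1, (Nat.sub_add_cancel hn).symm⟩
  set b : ℝ := m + 1 + 2 * α
  have h2α : 2 * α ≠ 0 := by positivity
  have hpoch_m : poch (2 * α + 1) m = poch (2 * α) (m + 1) / (2 * α) := by
    rw [poch_succ', mul_div_cancel_left₀ _ h2α]
  have hpoch_succ : poch (2 * α + 1) (m + 1) = poch (2 * α) (m + 1) * b / (2 * α) := by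
    rw [eq_div_iff h2α, mul_comm, mul_poch_add_one]
    push_cast
    ring
  have hcontig := hyp2F1Neg_contiguous m b (α + 1) ((1 - x) / 2)
  rw [Nat.add_sub_cancel, gegenbauerC_eq_hyp2F1Neg, gegenbauerC_eq_hyp2F1Neg, rchoose_eq_poch,
    jacobiQ_eq_hyp2F1Neg _ (poch_pos (by linarith) _).ne']
  simp only [show 2 * (α + 1 / 2) = 2 * α + 1 by ring, show α + 1 / 2 + 1 / 2 = α + 1 by ring,
    hpoch_m, hpoch_succ, Nat.factorial_succ]
  push_cast
  rw [show (m : ℝ) + 1 + α + (α - 1) + 1 = b by ring,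
    show (m : ℝ) + 1 + (2 * α + 1) = b + 1 by ring, show (m : ℝ) + (2 * α + 1) = b by ring]
  field_simp
  linear_combination (poch (2 * α) (m + 1)) * hcontig
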